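/- Let V : ℝ → ℝ be convex, bounded below, L-Lipschitz, and nonincreasing (its subdifferential is contained in [-L, 0]). Let β > K·L for a positive integer K, and let X be a random vector in ℝ^D with E‖X‖ < ∞. Define, for w = (w_1,…,w_K) ∈ (ℝ^D)^K, L(w) = E_{X,m}[∑_{k=1}^K V(m_k ⟨w_k, X + ∑_{j=1}^K m_j w_j⟩)] + β ∑_{k=1}^K ‖w_k‖², where m is uniform on {±1}^K independent of X. Then w = 0 is the unique global minimizer of L. -/

import Mathlib

open MeasureTheory ProbabilityTheory Real

/-- Euclidean inner product on `Fin n → ℝ`. -/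
noncomputable def dotp {n : ℕ} (x y : Fin n → ℝ) : ℝ := ∑ i, x i * y i

/-- Sign associated to a Boolean bit: `true ↦ 1`, `false ↦ -1`. -/
noncomputable def sgnB (b : Bool) : ℝ := if b then 1 else -1

/-!
Flipping the sign `m_k` turns the argument `s` of `V` in the `k`-th summand into
`2‖w_k‖² - s`, because `m_k` multiplies both `⟨w_k, X⟩` and the cross terms `m_j ⟨w_k, w_j⟩`,
`j ≠ k`, while `m_k² ‖w_k‖² = ‖w_k‖²` is unchanged. Pairing `m` with its flip and using
convexity, the average over `m` of the `k`-th summand is at least `V(‖w_k‖²) ≥ V(0) - L‖w_k‖²`,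
pointwise in `X`. Hence `L(w) ≥ K V(0) + (β - L) ∑ ‖w_k‖² > K V(0) = L(0)` when `w ≠ 0`,
since then `K ≥ 1` and `β > K L ≥ L`.
-/

lemma ConvexOn.two_mul_le_add_reflect {V : ℝ → ℝ} (hV : ConvexOn ℝ Set.univ V) (c x : ℝ) :
    2 * V c ≤ V x + V (2 * c - x) := by
  have h := hV.2 (Set.mem_univ x) (Set.mem_univ (2 * c - x))
    (by norm_num : (0 : ℝ) ≤ 1 / 2) (by norm_num : (0 : ℝ) ≤ 1 / 2) (by norm_num)
  simp only [smul_eq_mul] at h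
  rw [show (1 / 2 : ℝ) * x + 1 / 2 * (2 * c - x) = c by ring] at h
  linarith

lemma LipschitzWith.sub_mul_abs_le {V : ℝ → ℝ} {C : NNReal} (hV : LipschitzWith C V) (x y : ℝ) :
    V x - C * |y - x| ≤ V y := by
  have := hV.norm_sub_le x y
  rw [Real.norm_eq_abs, Real.norm_eq_abs, abs_sub_comm x] at this
  linarith [le_abs_self (V x - V y)]

lemma LipschitzWith.integrable_comp {E F Ω : Type*} [NormedAddCommGroup E]
    [NormedAddCommGroup F] [MeasurableSpace Ω] {μ : Measure Ω} [IsFiniteMeasure μ]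
    {V : E → F} {C : NNReal} (hV : LipschitzWith C V) {f : Ω → E} (hf : Integrable f μ) :
    Integrable (fun ω => V (f ω)) μ := by
  refine Integrable.mono' ((integrable_const ‖V 0‖).add (hf.norm.const_mul C))
    (hV.continuous.comp_aestronglyMeasurable hf.1) (ae_of_all _ fun ω => ?_)
  have := hV.norm_sub_le (f ω) 0
  rw [sub_zero] at this
  simp only [Pi.add_apply]
  linarith [norm_sub_norm_le (V (f ω)) (V 0)]

lemma Fintype.card_mul_le_sum_of_involutive {α : Type*} [Fintype α] {σ : α → α}
    (hσ : Function.Involutive σ) {f : α → ℝ} {a : ℝ} (h : ∀ x, 2 * a ≤ f x + f (σ x)) :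
    Fintype.card α * a ≤ ∑ x, f x := by
  have hsum : ∑ x, 2 * a ≤ ∑ x, (f x + f (σ x)) := Finset.sum_le_sum fun x _ => h x
  have hperm : ∑ x, f (σ x) = ∑ x, f x := Equiv.sum_comp (hσ.toPerm σ) f
  rw [Finset.sum_add_distrib, hperm, Finset.sum_const,
    Finset.card_univ, nsmul_eq_mul] at hsum
  linarith

lemma sum_update_mul {ι : Type*} [Fintype ι] [DecidableEq ι] (ε a : ι → ℝ) (k : ι) (t : ℝ) :
    ∑ j, Function.update ε k t j * a j = ∑ j, ε j * a j + (t - ε k) * a k := by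
  rw [Fintype.sum_eq_add_sum_compl k, Fintype.sum_eq_add_sum_compl k (fun j => ε j * a j),
    Function.update_self]
  have : ∑ j ∈ {k}ᶜ, Function.update ε k t j * a j = ∑ j ∈ {k}ᶜ, ε j * a j :=
    Finset.sum_congr rfl fun j hj => by
      rw [Function.update_of_ne (by simpa using hj)]
  rw [this]
  ring

lemma update_not_involutive {ι : Type*} [DecidableEq ι] (k : ι) :
    Function.Involutive fun m : ι → Bool => Function.update m k (!m k) := fun m => by
  simp

lemma sgnB_not (b : Bool) : sgnB (!b) = -sgnB b := by cases b <;> simp [sgnB]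

lemma sgnB_mul_self (b : Bool) : sgnB b * sgnB b = 1 := by cases b <;> norm_num [sgnB]

lemma abs_apply_le_sqrt_dotp_self {n : ℕ} (x : Fin n → ℝ) (i : Fin n) :
    |x i| ≤ √(dotp x x) :=
  Real.abs_le_sqrt <| (sq (x i)).symm ▸
    Finset.single_le_sum (fun j _ => mul_self_nonneg (x j)) (Finset.mem_univ i)

lemma dotp_add_sum_smul {n K : ℕ} (u x : Fin n → ℝ) (ε : Fin K → ℝ) (y : Fin K → Fin n → ℝ) :
    dotp u (fun i => x i + ∑ j, ε j * y j i) = dotp u x + ∑ j, ε j * dotp u (y j) := by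
  simp only [dotp, mul_add, Finset.sum_add_distrib, Finset.mul_sum]
  rw [Finset.sum_comm]
  simp only [mul_left_comm]

lemma dotp_self_nonneg {n : ℕ} (x : Fin n → ℝ) : 0 ≤ dotp x x :=
  Finset.sum_nonneg fun i _ => mul_self_nonneg (x i)

lemma dotp_self_pos {n : ℕ} {x : Fin n → ℝ} (hx : x ≠ 0) : 0 < dotp x x :=
  (dotp_self_nonneg x).lt_of_ne (Ne.symm (mt dotProduct_self_eq_zero.mp hx))

noncomputable def signedMargin {D K : ℕ} (w : Fin K → Fin D → ℝ) (x : Fin D → ℝ)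
    (m : Fin K → Bool) (k : Fin K) : ℝ :=
  sgnB (m k) * dotp (w k) (fun i => x i + ∑ j, sgnB (m j) * w j i)

section signedMargin

variable {D K : ℕ} (w : Fin K → Fin D → ℝ)

lemma signedMargin_eq (x : Fin D → ℝ) (m : Fin K → Bool) (k : Fin K) :
    signedMargin w x m k =
      sgnB (m k) * (dotp (w k) x + ∑ j, sgnB (m j) * dotp (w k) (w j)) := by
  rw [signedMargin, dotp_add_sum_smul]

lemma signedMargin_update_not (x : Fin D → ℝ) (m : Fin K → Bool) (k : Fin K) :
    signedMargin w x (Function.update m k (!m k)) k =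
      2 * dotp (w k) (w k) - signedMargin w x m k := by
  simp only [signedMargin_eq, Function.apply_update (fun _ => sgnB), sum_update_mul,
    Function.update_self, sgnB_not]
  linear_combination (2 * dotp (w k) (w k)) * sgnB_mul_self (m k)

lemma pow_mul_le_sum_comp_signedMargin {V : ℝ → ℝ} (hV : ConvexOn ℝ Set.univ V)
    (x : Fin D → ℝ) (k : Fin K) :
    2 ^ K * V (dotp (w k) (w k)) ≤ ∑ m, V (signedMargin w x m k) := by
  have := Fintype.card_mul_le_sum_of_involutive (update_not_involutive k)
    (f := fun m => V (signedMargin w x m k)) fun m => by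
      simpa only [signedMargin_update_not] using hV.two_mul_le_add_reflect _ _
  simpa using this

lemma card_mul_sub_le_avg_sum_comp_signedMargin {V : ℝ → ℝ} (hV : ConvexOn ℝ Set.univ V)
    {C : NNReal} (hLip : LipschitzWith C V) (x : Fin D → ℝ) :
    K * V 0 - C * ∑ k, dotp (w k) (w k) ≤
      (2 ^ K : ℝ)⁻¹ * ∑ m, ∑ k, V (signedMargin w x m k) := by
  have hk : ∀ k, V 0 - C * dotp (w k) (w k) ≤
      (2 ^ K : ℝ)⁻¹ * ∑ m, V (signedMargin w x m k) := fun k => by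
    have hlip := hLip.sub_mul_abs_le 0 (dotp (w k) (w k))
    rw [sub_zero, abs_of_nonneg (dotp_self_nonneg _)] at hlip
    rw [le_inv_mul_iff₀ (by positivity)]
    linarith [pow_mul_le_sum_comp_signedMargin w hV x k,
      mul_le_mul_of_nonneg_left hlip (by positivity : (0 : ℝ) ≤ 2 ^ K)]
  calc K * V 0 - C * ∑ k, dotp (w k) (w k) = ∑ k, (V 0 - C * dotp (w k) (w k)) := by
        simp [Finset.sum_sub_distrib, Finset.mul_sum]
    _ ≤ ∑ k, (2 ^ K : ℝ)⁻¹ * ∑ m, V (signedMargin w x m k) := Finset.sum_le_sum fun k _ => hk k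
    _ = (2 ^ K : ℝ)⁻¹ * ∑ m, ∑ k, V (signedMargin w x m k) := by
        rw [← Finset.mul_sum, Finset.sum_comm]

variable {Ω : Type*} [MeasurableSpace Ω] {μ : Measure Ω} {X : Ω → Fin D → ℝ}

lemma integrable_apply_of_integrable_sqrt_dotp_self (hX : Measurable X)
    (hint : Integrable (fun ω => √(dotp (X ω) (X ω))) μ) (i : Fin D) :
    Integrable (fun ω => X ω i) μ :=
  hint.mono' (measurable_pi_apply i |>.comp hX).aestronglyMeasurable
    (ae_of_all _ fun ω => abs_apply_le_sqrt_dotp_self (X ω) i)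

lemma integrable_signedMargin [IsFiniteMeasure μ] (hX : Measurable X)
    (hint : Integrable (fun ω => √(dotp (X ω) (X ω))) μ) (m : Fin K → Bool) (k : Fin K) :
    Integrable (fun ω => signedMargin w (X ω) m k) μ := by
  simp only [signedMargin_eq]
  refine Integrable.const_mul
    (Integrable.add (integrable_finsetSum _ fun i _ => ?_) (integrable_const _)) _
  exact (integrable_apply_of_integrable_sqrt_dotp_self hX hint i).const_mul _

end signedMargin

theorem stmt0 {D K : ℕ}
    (V : ℝ → ℝ) (hconv : ConvexOn ℝ Set.univ V)
    (L : ℝ) (hL : 0 ≤ L) (hLip : LipschitzWith L.toNNReal V)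
    (β : ℝ) (hβ : (K : ℝ) * L < β)
    {Ω : Type*} [MeasureSpace Ω] [IsProbabilityMeasure (ℙ : Measure Ω)]
    (X : Ω → Fin D → ℝ) (hX : Measurable X)
    (hint : Integrable (fun ω => Real.sqrt (dotp (X ω) (X ω))) ℙ)
    (Lfun : (Fin K → Fin D → ℝ) → ℝ)
    (hLfun : ∀ w, Lfun w =
      (∫ ω, (2 ^ K : ℝ)⁻¹ *
        ∑ m : Fin K → Bool, ∑ k : Fin K,
          V (sgnB (m k) *
            dotp (w k) (fun i => X ω i + ∑ j : Fin K, sgnB (m j) * w j i)) ∂ℙ)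
      + β * ∑ k : Fin K, dotp (w k) (w k)) :
    ∀ w : Fin K → Fin D → ℝ, w ≠ 0 → Lfun 0 < Lfun w := by
  intro w hw
  obtain ⟨k₀, hk₀⟩ := Function.ne_iff.mp hw
  have hnorm : 0 < ∑ k, dotp (w k) (w k) :=
    Finset.sum_pos' (fun k _ => dotp_self_nonneg _) ⟨k₀, Finset.mem_univ _, dotp_self_pos hk₀⟩
  have hLβ : L < β := by
    have : (1 : ℝ) ≤ K := by exact_mod_cast k₀.pos
    nlinarith
  have hzero : Lfun 0 = K * V 0 := by simp [hLfun, dotp]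
  have hLfun_w : Lfun w = (∫ ω, (2 ^ K : ℝ)⁻¹ * ∑ m, ∑ k, V (signedMargin w (X ω) m k)) +
      β * ∑ k, dotp (w k) (w k) := hLfun w
  have hlower : K * V 0 - L * ∑ k, dotp (w k) (w k) ≤
      ∫ ω, (2 ^ K : ℝ)⁻¹ * ∑ m, ∑ k, V (signedMargin w (X ω) m k) := by
    have hint_w : Integrable (fun ω => (2 ^ K : ℝ)⁻¹ *
        ∑ m, ∑ k, V (signedMargin w (X ω) m k)) ℙ :=
      (integrable_finsetSum _ fun m _ => integrable_finsetSum _ fun k _ =>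
        hLip.integrable_comp (integrable_signedMargin w hX hint m k)).const_mul _
    have hpointwise := card_mul_sub_le_avg_sum_comp_signedMargin w hconv hLip
    rw [Real.coe_toNNReal L hL] at hpointwise
    simpa only [integral_const, probReal_univ, one_smul] using
      integral_mono (integrable_const _) hint_w fun ω => hpointwise (X ω)
  rw [hzero, hLfun_w]
  linarith [mul_lt_mul_of_pos_right hLβ hnorm]
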